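/- For every run w (in which every read event is preceded by a write on the same variable) and every set 𝔹 of valid blocks of w, the block-happens-before order ≺_𝔹 satisfies: rf_w ⊆ ≺_𝔹, po_w ⊆ ≺_𝔹, and ≺_𝔹 ⊆ ≺_M, where ≺_M is the trace partial order of w. Moreover, if 𝔹 = ∅ then ≺_𝔹 = ≺_M. -/

import Mathlib

namespace TraceTheory

inductive Op : Type
  | rd : Op
  | wr : Op
deriving DecidableEq

structure Lbl (T X : Type) : Type where
  thread : T
  op : Op
  var : X
deriving DecidableEq

/-- A concurrent program run: a finite string over the concurrent alphabet. -/
abbrev Run (T X : Type) := List (Lbl T X)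

/-- An event of a run: a symbol together with its occurrence number. -/
abbrev Event (T X : Type) := Lbl T X × ℕ

variable {T X : Type} [DecidableEq T] [DecidableEq X]

/-- Dependence: same thread, or same variable with at least one write. -/
def Dep (a b : Lbl T X) : Prop :=
  a.thread = b.thread ∨ (a.var = b.var ∧ (a.op = Op.wr ∨ b.op = Op.wr))

/-- The event at position `i` of run `w`. -/
def evAt (w : Run T X) (i : Fin w.length) : Event T X :=
  (w.get i, (w.take (i : ℕ)).count (w.get i))

def HasEv (w : Run T X) (e : Event T X) : Prop := ∃ i : Fin w.length, evAt w i = e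

/-- `e` occurs (strictly) before `f` in `w`. -/
def EvBefore (w : Run T X) (e f : Event T X) : Prop :=
  ∃ i j : Fin w.length, (i : ℕ) < (j : ℕ) ∧ evAt w i = e ∧ evAt w j = f

/-- Program order. -/
def po (w : Run T X) (e f : Event T X) : Prop :=
  e.1.thread = f.1.thread ∧ EvBefore w e f

/-- Reads-from: `f` is a read that observes the write `e` (the last write on
the same variable before `f`). -/
def rf (w : Run T X) (e f : Event T X) : Prop :=
  e.1.op = Op.wr ∧ f.1.op = Op.rd ∧ e.1.var = f.1.var ∧
  ∃ i j : Fin w.length, evAt w i = e ∧ evAt w j = f ∧ (i : ℕ) < (j : ℕ) ∧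
    ∀ k : Fin w.length, (i : ℕ) < (k : ℕ) → (k : ℕ) < (j : ℕ) →
      ¬ ((w.get k).op = Op.wr ∧ (w.get k).var = f.1.var)

/-- Every read is preceded by a write on the same variable. -/
def WellFormed (w : Run T X) : Prop :=
  ∀ j : Fin w.length, (w.get j).op = Op.rd →
    ∃ i : Fin w.length, (i : ℕ) < (j : ℕ) ∧ (w.get i).op = Op.wr ∧
      (w.get i).var = (w.get j).var

/-- Reads-from equivalence. -/
def RfEquiv (w w' : Run T X) : Prop :=
  w.Perm w' ∧ po w = po w' ∧ rf w = rf w'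

/-- A single Mazurkiewicz swap of two adjacent independent symbols. -/
inductive MazSwap : Run T X → Run T X → Prop
  | swap (u v : Run T X) (a b : Lbl T X) (h : ¬ Dep a b) :
      MazSwap (u ++ a :: b :: v) (u ++ b :: a :: v)

/-- Trace (Mazurkiewicz) equivalence: the smallest equivalence closed under swaps. -/
def MazEquiv (w w' : Run T X) : Prop := Relation.EqvGen MazSwap w w'

/-- The trace (happens-before) partial order of a run. -/
def MazOrder (w : Run T X) : Event T X → Event T X → Prop :=
  Relation.TransGen (fun e f => EvBefore w e f ∧ Dep e.1 f.1)

/-- `B` is a block word (one write followed by reads of the same variable) that is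
valid as a contiguous segment whose suffix (remainder of the run) is `s`:
no read after the block reads from the block's write. -/
def ValidBlockSeg (B s : Run T X) : Prop :=
  ∃ a rest, B = a :: rest ∧ a.op = Op.wr ∧
    (∀ b ∈ rest, b.op = Op.rd ∧ b.var = a.var) ∧
    ∀ j : Fin s.length, (s.get j).op = Op.rd → (s.get j).var = a.var →
      ∃ m : Fin s.length, (m : ℕ) < (j : ℕ) ∧ (s.get m).op = Op.wr ∧
        (s.get m).var = a.var

def ThreadsDisjoint (B B' : Run T X) : Prop :=
  ∀ a ∈ B, ∀ b ∈ B', a.thread ≠ b.thread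

/-- A single block-equivalence step (clause (i): block swap, clause (ii): event swap). -/
inductive BlkSwap : Run T X → Run T X → Prop
  | block (p B B' s : Run T X) (hB : ValidBlockSeg B (B' ++ s)) (hB' : ValidBlockSeg B' s)
      (hd : ThreadsDisjoint B B') :
      BlkSwap (p ++ B ++ B' ++ s) (p ++ B' ++ B ++ s)
  | single (p s : Run T X) (a b : Lbl T X) (ht : a.thread ≠ b.thread)
      (h : a.var ≠ b.var ∨ (a.op = Op.rd ∧ b.op = Op.rd)) :
      BlkSwap (p ++ a :: b :: s) (p ++ b :: a :: s)

/-- Block equivalence: smallest reflexive transitive relation closed under the swaps. -/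
def BlkEquiv : Run T X → Run T X → Prop := Relation.ReflTransGen BlkSwap

/-- The set of events of the segment `B` of a run, given the prefix `p` preceding it. -/
def segEvents (p B : Run T X) : Set (Event T X) :=
  { e | ∃ i : Fin B.length, e = (B.get i, ((p ++ B.take (i : ℕ)).count (B.get i))) }

/-- Block-equivalence steps where block swaps are restricted to blocks from `𝔹`. -/
inductive BlkSwapIn (𝔹 : Set (Set (Event T X))) : Run T X → Run T X → Prop
  | block (p B B' s : Run T X) (hB : ValidBlockSeg B (B' ++ s)) (hB' : ValidBlockSeg B' s)
      (hBmem : segEvents p B ∈ 𝔹) (hB'mem : segEvents (p ++ B) B' ∈ 𝔹)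
      (hd : ThreadsDisjoint B B') :
      BlkSwapIn 𝔹 (p ++ B ++ B' ++ s) (p ++ B' ++ B ++ s)
  | single (p s : Run T X) (a b : Lbl T X) (ht : a.thread ≠ b.thread)
      (h : a.var ≠ b.var ∨ (a.op = Op.rd ∧ b.op = Op.rd)) :
      BlkSwapIn 𝔹 (p ++ a :: b :: s) (p ++ b :: a :: s)

/-- Block equivalence restricted to the set of blocks `𝔹`. -/
def BlkEquivIn (𝔹 : Set (Set (Event T X))) : Run T X → Run T X → Prop :=
  Relation.ReflTransGen (BlkSwapIn 𝔹)

/-- A valid block of `w` (as a set of events): a write event together with exactly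
the reads of `w` that read from it. -/
def IsValidBlockOf (w : Run T X) (S : Set (Event T X)) : Prop :=
  ∃ e : Event T X, HasEv w e ∧ e.1.op = Op.wr ∧ S = insert e { f | rf w e f }

def ValidBlocks (w : Run T X) (𝔹 : Set (Set (Event T X))) : Prop :=
  ∀ S ∈ 𝔹, IsValidBlockOf w S

/-- Block `S` occurs as a contiguous subword of `u`. -/
def SerialIn (u : Run T X) (S : Set (Event T X)) : Prop :=
  ∃ p B s, u = p ++ B ++ s ∧ segEvents p B = S

/-- Liberal atomicity of a run `v` with respect to a set of blocks `𝔹`. -/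
def LiberallyAtomic (v : Run T X) (𝔹 : Set (Set (Event T X))) : Prop :=
  ∃ u, BlkEquivIn 𝔹 u v ∧ ∀ S ∈ 𝔹, SerialIn u S

/-- Conflict serializability of a run `v` with respect to a set of blocks `𝔹`. -/
def ConflictSerializable (v : Run T X) (𝔹 : Set (Set (Event T X))) : Prop :=
  ∃ u, MazEquiv u v ∧ ∀ S ∈ 𝔹, SerialIn u S

/-- The block-happens-before order `≺_𝔹`. -/
def Bhb (w : Run T X) (𝔹 : Set (Set (Event T X))) : Event T X → Event T X → Prop :=
  Relation.TransGen (fun e f =>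
    EvBefore w e f ∧ Dep e.1 f.1 ∧
    ¬ (e.1.thread ≠ f.1.thread ∧ ∃ B ∈ 𝔹, ∃ B' ∈ 𝔹, B ≠ B' ∧ e ∈ B ∧ f ∈ B'))

/-- The saturated order `⪻_𝔹` on events (`Sum.inl`) and blocks (`Sum.inr`). -/
inductive Sat (w : Run T X) (𝔹 : Set (Set (Event T X))) :
    (Event T X ⊕ Set (Event T X)) → (Event T X ⊕ Set (Event T X)) → Prop
  | base {e f : Event T X} : Bhb w 𝔹 e f → Sat w 𝔹 (Sum.inl e) (Sum.inl f)
  | toBlk {e f : Event T X} {B B' : Set (Event T X)} :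
      e.1.var = f.1.var → B ∈ 𝔹 → B' ∈ 𝔹 → e ∈ B → f ∈ B' → B ≠ B' →
      Sat w 𝔹 (Sum.inl e) (Sum.inl f) → Sat w 𝔹 (Sum.inr B) (Sum.inr B')
  | ofBlk {B B' : Set (Event T X)} {e f : Event T X} :
      Sat w 𝔹 (Sum.inr B) (Sum.inr B') → e ∈ B → f ∈ B' →
      Sat w 𝔹 (Sum.inl e) (Sum.inl f)

/-- The event part of the saturated order `⪻_𝔹`. -/
def SatEv (w : Run T X) (𝔹 : Set (Set (Event T X))) (e f : Event T X) : Prop :=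
  Sat w 𝔹 (Sum.inl e) (Sum.inl f)

def SameVarBlocks (B B' : Set (Event T X)) : Prop :=
  ∃ x : X, (∀ e ∈ B, e.1.var = x) ∧ (∀ e ∈ B', e.1.var = x)

/-- No two distinct blocks of `𝔹` on the same variable overlap in `v`. -/
def NoOverlap (v : Run T X) (𝔹 : Set (Set (Event T X))) : Prop :=
  ∀ B ∈ 𝔹, ∀ B' ∈ 𝔹, B ≠ B' → SameVarBlocks B B' →
    (∀ e ∈ B, ∀ f ∈ B', EvBefore v e f) ∨ (∀ e ∈ B, ∀ f ∈ B', EvBefore v f e)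

/-- `v` is a proper linearization (of the events of `w`) of the order `ord`. -/
def ProperLin (w : Run T X) (𝔹 : Set (Set (Event T X)))
    (ord : Event T X → Event T X → Prop) (v : Run T X) : Prop :=
  w.Perm v ∧ (∀ e f, ord e f → EvBefore v e f) ∧ NoOverlap v 𝔹


/-- `e` is causally ordered before `f` under reads-from equivalence:
`e` occurs before `f` in every reads-from equivalent run. -/
def CausOrd (w : Run T X) (e f : Event T X) : Prop :=
  ∀ w', RfEquiv w w' → EvBefore w' e f

/-- `e` and `f` are causally concurrent under reads-from equivalence. -/
def CausConc (w : Run T X) (e f : Event T X) : Prop :=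
  ¬ CausOrd w e f ∧ ¬ CausOrd w f e

/-
Block-happens-before is the transitive closure of a subrelation of the generating relation of
the trace order, and the removed pairs are cross-thread pairs in distinct blocks, so there are
none when `𝔹 = ∅`. Program-order pairs share a thread and are never removed. A reads-from pair
`(e, f)` is never removed either: a valid block containing the write `e`, or a read `f` that
reads from `e`, is the block of `e`, because every read reads from a unique write.
-/

lemma count_take_lt_count_take {α : Type*} [DecidableEq α] (l : List α) {i j : Fin l.length}
    (h : (i : ℕ) < (j : ℕ)) :
    (l.take (i : ℕ)).count (l.get i) < (l.take (j : ℕ)).count (l.get i) :=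
  calc (l.take (i : ℕ)).count (l.get i)
      < (l.take ((i : ℕ) + 1)).count (l.get i) := by
        rw [List.take_add_one, List.count_append, List.getElem?_eq_getElem i.isLt]
        simp
    _ ≤ (l.take (j : ℕ)).count (l.get i) := (List.take_sublist_take_left h).count_le _

lemma evAt_injective (w : Run T X) : Function.Injective (evAt w) := by
  intro i j h
  simp only [evAt, Prod.mk.injEq] at h
  obtain ⟨hlabel, hcount⟩ := h
  rw [hlabel] at hcount
  rcases lt_trichotomy (i : ℕ) (j : ℕ) with hij | hij | hij
  · have := count_take_lt_count_take w hij
    rw [hlabel] at this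
    omega
  · exact Fin.ext hij
  · have := count_take_lt_count_take w hij
    omega

lemma rf_left_unique (w : Run T X) {e e' f : Event T X} (h : rf w e f) (h' : rf w e' f) :
    e = e' := by
  obtain ⟨hew, -, hv, i, j, rfl, rfl, hij, hnb⟩ := h
  obtain ⟨hew', -, hv', i', j', rfl, hj, hij', hnb'⟩ := h'
  obtain rfl : j' = j := evAt_injective w hj
  rcases lt_trichotomy (i : ℕ) (i' : ℕ) with hii | hii | hii
  · exact absurd ⟨hew', hv'⟩ (hnb i' hii hij')
  · rw [Fin.ext hii]
  · exact absurd ⟨hew, hv⟩ (hnb' i hii hij)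

namespace IsValidBlockOf

variable {w : Run T X} {S : Set (Event T X)} {e f : Event T X}

lemma eq_of_rf_of_mem_left (hS : IsValidBlockOf w S) (hef : rf w e f) (he : e ∈ S) :
    S = insert e {g | rf w e g} := by
  obtain ⟨b, -, -, rfl⟩ := hS
  rcases he with rfl | hbe
  · rfl
  · exact absurd (hbe.2.1.symm.trans hef.1) (by decide)

lemma eq_of_rf_of_mem_right (hS : IsValidBlockOf w S) (hef : rf w e f) (hf : f ∈ S) :
    S = insert e {g | rf w e g} := by
  obtain ⟨b, -, hbw, rfl⟩ := hS
  rcases hf with rfl | hbf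
  · exact absurd (hbw.symm.trans hef.2.1) (by decide)
  · rw [rf_left_unique w hbf hef]

end IsValidBlockOf

lemma bhb_le_mazOrder (w : Run T X) (𝔹 : Set (Set (Event T X))) : Bhb w 𝔹 ≤ MazOrder w :=
  Relation.TransGen.mono fun _ _ h => ⟨h.1, h.2.1⟩

lemma bhb_empty (w : Run T X) : Bhb w ∅ = MazOrder w :=
  le_antisymm (bhb_le_mazOrder w ∅) <|
    Relation.TransGen.mono fun _ _ h => ⟨h.1, h.2, fun ⟨_, _, hB, _⟩ => hB⟩

lemma po_le_bhb (w : Run T X) (𝔹 : Set (Set (Event T X))) : po w ≤ Bhb w 𝔹 :=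
  fun _ _ ⟨hth, hbef⟩ => .single ⟨hbef, .inl hth, fun h => h.1 hth⟩

lemma rf_le_bhb (w : Run T X) (𝔹 : Set (Set (Event T X))) (hval : ValidBlocks w 𝔹) :
    rf w ≤ Bhb w 𝔹 := by
  intro e f hef
  have ⟨hew, _, hv, i, j, hi, hj, hij, _⟩ := hef
  refine .single ⟨⟨i, j, hij, hi, hj⟩, .inr ⟨hv, .inl hew⟩, ?_⟩
  rintro ⟨-, B, hB, B', hB', hne, he, hf⟩
  exact hne <| ((hval B hB).eq_of_rf_of_mem_left hef he).trans
    ((hval B' hB').eq_of_rf_of_mem_right hef hf).symm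

theorem bhb_characterization_general
    (T X : Type) [DecidableEq T] [DecidableEq X]
    (w : Run T X)
    (𝔹 : Set (Set (Event T X))) (hval : ValidBlocks w 𝔹) :
    (∀ e f : Event T X, rf w e f → Bhb w 𝔹 e f) ∧
    (∀ e f : Event T X, po w e f → Bhb w 𝔹 e f) ∧
    (∀ e f : Event T X, Bhb w 𝔹 e f → MazOrder w e f) ∧
    (𝔹 = ∅ → Bhb w 𝔹 = MazOrder w) :=
  ⟨rf_le_bhb w 𝔹 hval, po_le_bhb w 𝔹, bhb_le_mazOrder w 𝔹, fun h => h ▸ bhb_empty w⟩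

/-- Characterization of `≺_𝔹`: block happens-before contains
reads-from and program order, is contained in the trace order `≺_M`, and
coincides with `≺_M` when `𝔹 = ∅`. -/
theorem bhb_characterization
    (T X : Type) [DecidableEq T] [DecidableEq X]
    (w : Run T X) (hwf : WellFormed w)
    (𝔹 : Set (Set (Event T X))) (hval : ValidBlocks w 𝔹) :
    (∀ e f : Event T X, rf w e f → Bhb w 𝔹 e f) ∧
    (∀ e f : Event T X, po w e f → Bhb w 𝔹 e f) ∧
    (∀ e f : Event T X, Bhb w 𝔹 e f → MazOrder w e f) ∧
    (𝔹 = ∅ → Bhb w 𝔹 = MazOrder w) :=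
  bhb_characterization_general T X w 𝔹 hval

end TraceTheory
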